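/- arXiv:1501.07366 — 2 statements merged into one kernel-verified Lean document; each statement's English description precedes it below -/
import Mathlib

section
/- Let G be a finite non-abelian p-group such that Var(G) = Inn(G), where Var(G) is the group of autocentral automorphisms. Then the commutator subgroup G' is contained in the absolute center L(G), and L(G) is cyclic. -/
/-! Every inner automorphism is autocentral, so all commutators lie in `L(G) ≤ Z(G)`. Hence
`G / Z(G)` is abelian and its exponent divides that of `L(G)`. Each homomorphism
`f : G / Z(G) → L(G)` gives an autocentral automorphism `g ↦ g * f (g Z(G))`, distinct `f` giving
distinct automorphisms; all of them are inner, so `|Hom(G / Z(G), L(G))| ≤ |Inn G| = |G / Z(G)|`.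
If `L(G)` were not cyclic, it would contain a cyclic subgroup `C` of order `exp L(G)` and an element
of order `p` outside `C`. By duality `Hom(G / Z(G), C)` already has `|G / Z(G)|` elements, and a
homomorphism onto that element of order `p` is one more. -/

/-- The absolute center `L(G) = {g ∈ G : α(g) = g for all α ∈ Aut(G)}`. -/
def absoluteCenter (G : Type*) [Group G] : Subgroup G where
  carrier := {g | ∀ α : MulAut G, α g = g}
  one_mem' := fun α => map_one α
  mul_mem' := by
    intro a b ha hb α
    rw [map_mul, ha α, hb α]
  inv_mem' := by
    intro a ha α
    rw [map_inv, ha α]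

open Monoid Subgroup
open scoped commutatorElement

theorem card_monoidHom_eq_card_of_isCyclic {Q C : Type*} [CommGroup Q] [Finite Q] [CommGroup C]
    [Finite C] [IsCyclic C] (h : exponent Q ∣ Nat.card C) : Nat.card (Q →* C) = Nat.card Q := by
  have : HasEnoughRootsOfUnity C (Nat.card C) := by
    obtain ⟨g, hg⟩ := IsCyclic.exists_ofOrder_eq_natCard (α := C)
    have : IsCyclic Cˣ := isCyclic_of_surjective _ (toUnits : C ≃* Cˣ).surjective
    exact ⟨⟨g, hg ▸ IsPrimitiveRoot.orderOf g⟩, Subgroup.isCyclic _⟩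
  have := HasEnoughRootsOfUnity.of_dvd C h
  rw [← CommGroup.card_monoidHom_of_hasEnoughRootsOfUnity Q C]
  exact Nat.card_congr (MulEquiv.monoidHomCongrRight toUnits).toEquiv

/- Take `y ∉ ⟨b⟩` with `y ^ p = b ^ k`. As `b` has maximal order, `p ∣ k`, and `y * b ^ (-k / p)`
is the wanted element. -/
theorem IsPGroup.exists_orderOf_eq_prime_notMem_zpowers {p : ℕ} [Fact p.Prime] {L : Type*}
    [CommGroup L] [Finite L] (hL : IsPGroup p L) (hcyc : ¬ IsCyclic L) {b : L}
    (hb : orderOf b = exponent L) : ∃ d : L, orderOf d = p ∧ d ∉ zpowers b := by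
  have hne : zpowers b ≠ ⊤ := fun h => hcyc (isCyclic_iff_exists_zpowers_eq_top.mpr ⟨b, h⟩)
  obtain ⟨n, hn, hcard⟩ :=
    (hL.to_quotient _).nontrivial_iff_card.mp (QuotientGroup.nontrivial_iff.mpr hne)
  obtain ⟨y', hy'⟩ := exists_prime_orderOf_dvd_card' (G := L ⧸ zpowers b) p
    (hcard ▸ dvd_pow_self p hn.ne')
  obtain ⟨y, rfl⟩ := QuotientGroup.mk_surjective y'
  have hyb : y ∉ zpowers b := by
    rw [← QuotientGroup.eq_one_iff]
    intro h
    rw [h, orderOf_one] at hy'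
    exact (Fact.out : p.Prime).one_lt.ne hy'
  obtain ⟨k, hk⟩ : y ^ p ∈ zpowers b := by
    rw [← QuotientGroup.eq_one_iff, QuotientGroup.mk_pow, ← hy', pow_orderOf_eq_one]
  replace hk : b ^ k = y ^ p := hk
  obtain ⟨m, hm⟩ : p ∣ exponent L :=
    hy' ▸ (orderOf_map_dvd (QuotientGroup.mk' _) y).trans (order_dvd_exponent y)
  obtain ⟨k', rfl⟩ : (p : ℤ) ∣ k := by
    have hm0 : (m : ℤ) ≠ 0 := by
      exact_mod_cast right_ne_zero_of_mul (hm ▸ exponent_ne_zero_of_finite)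
    have : (p * m : ℤ) ∣ k * m := by
      rw [← Int.natCast_mul, ← hm, ← hb, orderOf_dvd_iff_zpow_eq_one, zpow_mul, hk,
        ← zpow_natCast, ← zpow_mul, ← Nat.cast_mul, ← hm, zpow_natCast, Monoid.pow_exponent_eq_one]
    exact (mul_dvd_mul_iff_right hm0).mp this
  refine ⟨y * b ^ (-k'), orderOf_eq_prime ?_ ?_, ?_⟩
  · rw [mul_pow, ← zpow_natCast (b ^ _), ← zpow_mul, ← hk]
    group
  · intro h
    exact hyb (mul_eq_one_iff_eq_inv.mp h ▸ inv_mem (zpow_mem_zpowers b _))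
  · intro h
    exact hyb (by simpa using mul_mem h (zpow_mem_zpowers b k'))

theorem IsPGroup.exists_monoidHom_apply_eq {p : ℕ} [Fact p.Prime] {Q L : Type*} [CommGroup Q]
    [Finite Q] [Nontrivial Q] [Group L] (hQ : IsPGroup p Q) {d : L} (hd : orderOf d = p) :
    ∃ f : Q →* L, ∃ q, f q = d := by
  obtain ⟨n, hn, hcard⟩ := hQ.nontrivial_iff_card.mp ‹_›
  obtain ⟨H, hH⟩ := Sylow.exists_subgroup_card_pow_prime p (n := n - 1)
    (hcard ▸ pow_dvd_pow p (Nat.sub_le n 1))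
  have hindex : Nat.card (Q ⧸ H) = p := by
    have := H.card_mul_index
    rw [hH, hcard, ← Nat.sub_add_cancel hn, pow_succ, Nat.add_sub_cancel] at this
    exact Nat.eq_of_mul_eq_mul_left (pow_pos (Fact.out : p.Prime).pos _) this
  let e : Q ⧸ H ≃* zpowers d := mulEquivOfPrimeCardEq hindex (by rw [Nat.card_zpowers, hd])
  obtain ⟨q, hq⟩ := QuotientGroup.mk_surjective (e.symm ⟨d, mem_zpowers d⟩)
  exact ⟨(zpowers d).subtype.comp (e.toMonoidHom.comp (QuotientGroup.mk' H)), q, by simp [hq]⟩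

theorem IsPGroup.card_lt_card_monoidHom {p : ℕ} [Fact p.Prime] {Q L : Type*} [CommGroup Q]
    [Finite Q] [Nontrivial Q] [CommGroup L] [Finite L] (hQ : IsPGroup p Q) (hL : IsPGroup p L)
    (hcyc : ¬ IsCyclic L) (hexp : exponent Q ∣ exponent L) : Nat.card Q < Nat.card (Q →* L) := by
  obtain ⟨b, hb⟩ := exists_orderOf_eq_exponent ExponentExists.of_finite (G := L)
  obtain ⟨d, hd, hdb⟩ := hL.exists_orderOf_eq_prime_notMem_zpowers hcyc hb
  obtain ⟨f, q, hfq⟩ := hQ.exists_monoidHom_apply_eq hd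
  let ι : (Q →* zpowers b) → (Q →* L) := (zpowers b).subtype.comp
  have hι : Function.Injective ι := fun f g hfg =>
    MonoidHom.ext fun q => Subtype.ext (DFunLike.congr_fun hfg q)
  have hf : f ∉ Set.range ι := by
    rintro ⟨g, rfl⟩
    exact hdb (hfq ▸ (g q).2)
  have : Finite (Q →* L) := .of_injective _ DFunLike.coe_injective
  have : Finite (Q →* zpowers b) := .of_injective _ DFunLike.coe_injective
  have := Fintype.ofFinite (Q →* L)
  have := Fintype.ofFinite (Q →* zpowers b)
  rw [← card_monoidHom_eq_card_of_isCyclic (C := zpowers b) (by rwa [Nat.card_zpowers, hb]),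
    Nat.card_eq_fintype_card, Nat.card_eq_fintype_card]
  exact Fintype.card_lt_of_injective_of_notMem ι hι hf

section AbsoluteCenter

variable {G : Type*} [Group G]

def MulAut.IsAutocentral (α : MulAut G) : Prop := ∀ g : G, g⁻¹ * α g ∈ absoluteCenter G

theorem absoluteCenter_le_center : absoluteCenter G ≤ center G := fun z hz =>
  mem_center_iff.mpr fun g => by
    simpa [mul_inv_eq_iff_eq_mul] using hz (MulAut.conj g)

theorem commutatorElement_mem_absoluteCenter
    (h : ∀ x : G, (MulAut.conj x).IsAutocentral) (a b : G) : ⁅a, b⁆ ∈ absoluteCenter G := by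
  simpa [commutatorElement_def, mul_assoc] using h b a⁻¹

theorem commutator_le_absoluteCenter (h : ∀ x : G, (MulAut.conj x).IsAutocentral) :
    commutator G ≤ absoluteCenter G :=
  commutator_le.mpr fun a _ b _ => commutatorElement_mem_absoluteCenter h a b

theorem commutatorElement_pow_left (h : ∀ a b : G, ⁅a, b⁆ ∈ center G) (x g : G) (n : ℕ) :
    ⁅x ^ n, g⁆ = ⁅x, g⁆ ^ n := by
  induction n with
  | zero => simp
  | succ n ih =>
    rw [pow_succ', commutatorElement_mul_left_eq_conj_mul, mem_center_iff.mp (h _ _) x,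
      mul_inv_cancel_right, ih, pow_succ]

theorem exponent_quotient_center_dvd {H : Subgroup G} (hH : H ≤ center G)
    (h : ∀ a b : G, ⁅a, b⁆ ∈ H) : exponent (G ⧸ center G) ∣ exponent H := by
  refine exponent_dvd_of_forall_pow_eq_one fun q => ?_
  induction q using QuotientGroup.induction_on with | H x => ?_
  rw [← QuotientGroup.mk_pow, QuotientGroup.eq_one_iff, mem_center_iff]
  intro g
  rw [eq_comm, ← commutatorElement_eq_one_iff_mul_comm,
    commutatorElement_pow_left (fun a b => hH (h a b)), Subgroup.pow_exponent_eq_one (h x g)]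

theorem MulAut.ker_conj : (MulAut.conj : G →* MulAut G).ker = center G := by
  ext z
  simp only [MonoidHom.mem_ker, MulEquiv.ext_iff, MulAut.conj_apply, MulAut.one_apply,
    mem_center_iff, mul_inv_eq_iff_eq_mul]
  exact forall_congr' fun _ => eq_comm

def MulAut.ofCentralHom (F : G ⧸ center G →* center G) : MulAut G where
  toFun g := g * F g
  invFun g := g * (F g)⁻¹
  left_inv g := by simp
  right_inv g := by simp
  map_mul' a b := by
    simp only [QuotientGroup.mk_mul, map_mul, Subgroup.coe_mul, mul_assoc,
      (mem_center_iff.mp (F a).2 _).symm]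

@[simp]
theorem MulAut.ofCentralHom_apply (F : G ⧸ center G →* center G) (g : G) :
    MulAut.ofCentralHom F g = g * F g := rfl

theorem card_monoidHom_le_card_quotient_center [Finite G]
    (h : ∀ α : MulAut G, α.IsAutocentral → α ∈ (MulAut.conj : G →* MulAut G).range) :
    Nat.card (G ⧸ center G →* absoluteCenter G) ≤ Nat.card (G ⧸ center G) := by
  let ι (F : G ⧸ center G →* absoluteCenter G) : (MulAut.conj : G →* MulAut G).range :=
    ⟨MulAut.ofCentralHom ((inclusion absoluteCenter_le_center).comp F), h _ fun g => by simp⟩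
  have hι : Function.Injective ι := by
    intro F F' hFF'
    ext g
    exact mul_left_cancel (congrArg (fun α : MulAut G => α g) (Subtype.ext_iff.mp hFF'))
  calc _ ≤ Nat.card (MulAut.conj : G →* MulAut G).range := Nat.card_le_card_of_injective ι hι
    _ = _ := by
      rw [← Nat.card_congr (QuotientGroup.quotientKerEquivRange _).toEquiv, MulAut.ker_conj]

end AbsoluteCenter

/-- Let `G` be a finite non-abelian `p`-group with `Var(G) = Inn(G)`, where `Var(G)` is the
group of autocentral automorphisms.  Then `G' ≤ L(G)` and `L(G)` is cyclic. -/
theorem stmt_9 (p : ℕ) [Fact p.Prime] (G : Type*) [Group G] [Finite G]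
    (hp : IsPGroup p G) (hnab : ∃ a b : G, a * b ≠ b * a)
    (V : Subgroup (MulAut G))
    (hV : ∀ α : MulAut G, α ∈ V ↔ ∀ g : G, g⁻¹ * α g ∈ absoluteCenter G)
    (heq : V = (MulAut.conj : G →* MulAut G).range) :
    commutator G ≤ absoluteCenter G ∧ IsCyclic (absoluteCenter G) := by
  have hinner (x : G) : (MulAut.conj x).IsAutocentral := (hV _).mp (heq ▸ ⟨x, rfl⟩)
  refine ⟨commutator_le_absoluteCenter hinner, ?_⟩
  by_contra hcyc
  have hLZ := absoluteCenter_le_center (G := G)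
  have : IsMulCommutative (G ⧸ center G) := Normal.quotient_commutative_iff_commutator_le.mpr
    ((commutator_le_absoluteCenter hinner).trans hLZ)
  have : IsMulCommutative (absoluteCenter G) :=
    le_centralizer_iff_isMulCommutative.mp (hLZ.trans (center_le_centralizer _))
  have : Nontrivial (G ⧸ center G) := by
    obtain ⟨a, b, hab⟩ := hnab
    exact QuotientGroup.nontrivial_iff.mpr fun h => hab (mem_center_iff.mp (h ▸ mem_top a) b).symm
  have hle := card_monoidHom_le_card_quotient_center fun α hα => heq ▸ (hV α).mpr hα
  have hexp := exponent_quotient_center_dvd hLZ (commutatorElement_mem_absoluteCenter hinner)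
  open scoped IsMulCommutative in
  have hlt := (hp.to_quotient (center G)).card_lt_card_monoidHom (hp.to_subgroup _) hcyc hexp
  exact hle.not_gt hlt
end

section
/- Let G be a non-abelian finite p-group that is autonilpotent of class 2 (G* ≤ L(G)), with L(G) = Z(G) and L(G) cyclic. Then Var(G) = Inn(G). -/
/-- The autocommutator subgroup `G* = ⟨g⁻¹α(g) : g ∈ G, α ∈ Aut(G)⟩`. -/
def autocommutator (G : Type*) [Group G] : Subgroup G :=
  Subgroup.closure {x : G | ∃ (g : G) (α : MulAut G), x = g⁻¹ * α g}

/-! Since `G* ≤ Z(G) ≤ L(G)`, every automorphism `α` moves each `g` by a central element, and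
`g ↦ g⁻¹ α(g)` is a homomorphism `G/Z(G) → Z(G)`; this embeds `Aut(G)` into `Hom(G/Z(G), Z(G))`.
Applied to `α = conj x`, the embedding shows `x ^ |Z(G)| ∈ Z(G)`, so the exponent of the abelian
group `G/Z(G)` divides `|Z(G)|`. As `Z(G)` is cyclic, `Hom(G/Z(G), Z(G))` then has exactly
`|G/Z(G)| = |Inn(G)|` elements, so `|Aut(G)| ≤ |Inn(G)|`. Finally `Var(G) = Aut(G)` because
`G* ≤ L(G)`. -/

section

open Subgroup
open scoped IsMulCommutative

theorem IsCyclic.hasEnoughRootsOfUnity_natCard (M : Type*) [CommGroup M] [Finite M]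
    [IsCyclic M] : HasEnoughRootsOfUnity M (Nat.card M) where
  prim := by
    obtain ⟨g, hg⟩ := IsCyclic.exists_generator (α := M)
    exact ⟨g, orderOf_eq_card_of_forall_mem_zpowers hg ▸ IsPrimitiveRoot.orderOf g⟩
  cyc :=
    have : IsCyclic Mˣ := isCyclic_of_surjective (toUnits (G := M)) toUnits.surjective
    inferInstance

theorem card_monoidHom_of_exponent_dvd_card (A M : Type*) [CommGroup A] [Finite A]
    [CommGroup M] [Finite M] [IsCyclic M] (h : Monoid.exponent A ∣ Nat.card M) :
    Nat.card (A →* M) = Nat.card A := by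
  have := IsCyclic.hasEnoughRootsOfUnity_natCard M
  have : NeZero (Nat.card M) := ⟨Nat.card_pos.ne'⟩
  have := HasEnoughRootsOfUnity.of_dvd M h
  rw [Nat.card_congr (MulEquiv.monoidHomCongrRight (toUnits (G := M))).toEquiv]
  exact CommGroup.card_monoidHom_of_hasEnoughRootsOfUnity A M

theorem MulAut.conj_ker (G : Type*) [Group G] :
    (MulAut.conj : G →* MulAut G).ker = center G := by
  ext x
  simp only [MonoidHom.mem_ker, mem_center_iff, MulEquiv.ext_iff, MulAut.conj_apply,
    MulAut.one_apply, mul_inv_eq_iff_eq_mul]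
  exact forall_congr' fun _ => eq_comm

variable {G : Type*} [Group G]

theorem inv_mul_apply_mem_autocommutator (α : MulAut G) (g : G) :
    g⁻¹ * α g ∈ autocommutator G :=
  subset_closure ⟨g, α, rfl⟩

theorem commutator_le_autocommutator : commutator G ≤ autocommutator G := by
  rw [commutator_def, commutator_le]
  intro g _ h _
  convert inv_mul_apply_mem_autocommutator (MulAut.conj h) g⁻¹ using 1
  rw [commutatorElement_def, MulAut.conj_apply]
  group

theorem isMulCommutative_quotient_center (h : autocommutator G ≤ center G) :
    IsMulCommutative (G ⧸ center G) :=
  Normal.quotient_commutative_iff_commutator_le.mpr (commutator_le_autocommutator.trans h)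

def centerDifference (h1 : autocommutator G ≤ center G) (α : MulAut G) : G →* center G where
  toFun g := ⟨g⁻¹ * α g, h1 (inv_mul_apply_mem_autocommutator α g)⟩
  map_one' := by ext; simp
  map_mul' g h := by
    ext
    have hc := mem_center_iff.mp (h1 (inv_mul_apply_mem_autocommutator α g)) h⁻¹
    simp only [mul_inv_rev, map_mul, Subgroup.coe_mul]
    calc h⁻¹ * g⁻¹ * (α g * α h) = h⁻¹ * (g⁻¹ * α g) * α h := by group
      _ = g⁻¹ * α g * (h⁻¹ * α h) := by rw [hc]; group

def autDifference (h1 : autocommutator G ≤ center G) (h2 : center G ≤ absoluteCenter G) :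
    MulAut G →* (G ⧸ center G →* center G) where
  toFun α := QuotientGroup.lift _ (centerDifference h1 α) fun z hz => by
    ext
    simp [centerDifference, h2 hz α]
  map_one' := by
    ext
    simp [centerDifference]
  map_mul' α β := by
    ext g
    show g⁻¹ * α (β g) = g⁻¹ * α g * (g⁻¹ * β g)
    have hβ : β g = g * (g⁻¹ * β g) := by group
    rw [hβ, map_mul, h2 (h1 (inv_mul_apply_mem_autocommutator β g)) α]
    group

theorem autDifference_injective
    (h1 : autocommutator G ≤ center G) (h2 : center G ≤ absoluteCenter G) :
    Function.Injective (autDifference h1 h2) := by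
  intro α β h
  ext g
  exact mul_left_cancel (congrArg (fun f => (f g : G)) h)

theorem pow_card_center_mem_center
    (h1 : autocommutator G ≤ center G) (h2 : center G ≤ absoluteCenter G) (x : G) :
    x ^ Nat.card (center G) ∈ center G := by
  have : MulAut.conj x ^ Nat.card (center G) = 1 := by
    refine autDifference_injective h1 h2 ?_
    rw [map_pow, map_one]
    exact MonoidHom.ext fun q => by rw [MonoidHom.pow_apply, pow_card_eq_one', MonoidHom.one_apply]
  rwa [← map_pow, ← MonoidHom.mem_ker, MulAut.conj_ker] at this

theorem exponent_quotient_center_dvd_card_center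
    (h1 : autocommutator G ≤ center G) (h2 : center G ≤ absoluteCenter G) :
    Monoid.exponent (G ⧸ center G) ∣ Nat.card (center G) :=
  Monoid.exponent_dvd_of_forall_pow_eq_one fun q => by
    induction q using QuotientGroup.induction_on with | H x =>
    rw [← QuotientGroup.mk_pow, QuotientGroup.eq_one_iff]
    exact pow_card_center_mem_center h1 h2 x

theorem card_mulAut_le_card_quotient_center [Finite G] [IsCyclic (center G)]
    (h1 : autocommutator G ≤ center G) (h2 : center G ≤ absoluteCenter G) :
    Nat.card (MulAut G) ≤ Nat.card (G ⧸ center G) := by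
  have := isMulCommutative_quotient_center h1
  have : Finite (G ⧸ center G →* center G) := Finite.of_injective _ DFunLike.coe_injective
  calc Nat.card (MulAut G) ≤ Nat.card (G ⧸ center G →* center G) :=
        Nat.card_le_card_of_injective _ (autDifference_injective h1 h2)
    _ = Nat.card (G ⧸ center G) :=
        card_monoidHom_of_exponent_dvd_card _ _ (exponent_quotient_center_dvd_card_center h1 h2)

theorem MulAut.conj_range_eq_top_of_isCyclic_center [Finite G] [IsCyclic (center G)]
    (h1 : autocommutator G ≤ center G) (h2 : center G ≤ absoluteCenter G) :
    (MulAut.conj : G →* MulAut G).range = ⊤ := by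
  refine eq_top_of_le_card _ ((card_mulAut_le_card_quotient_center h1 h2).trans_eq ?_)
  exact Nat.card_congr ((QuotientGroup.quotientMulEquivOfEq (MulAut.conj_ker G).symm).trans
    (QuotientGroup.quotientKerEquivRange _)).toEquiv

end

theorem stmt_12_general (G : Type*) [Group G] [Finite G]
    (h1 : autocommutator G ≤ absoluteCenter G)
    (h2 : absoluteCenter G = Subgroup.center G)
    (h3 : IsCyclic (absoluteCenter G))
    (V : Subgroup (MulAut G))
    (hV : ∀ α : MulAut G, α ∈ V ↔ ∀ g : G, g⁻¹ * α g ∈ absoluteCenter G) :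
    V = (MulAut.conj : G →* MulAut G).range := by
  rw [h2] at h1 h3
  have hV_top : V = ⊤ := eq_top_iff.mpr fun α _ =>
    (hV α).mpr fun g => h2 ▸ h1 (inv_mul_apply_mem_autocommutator α g)
  rw [hV_top, MulAut.conj_range_eq_top_of_isCyclic_center h1 h2.ge]

/-- Let `G` be a non-abelian finite `p`-group that is autonilpotent of class 2
(`G* ≤ L(G)`), with `L(G) = Z(G)` and `L(G)` cyclic.  Then `Var(G) = Inn(G)`. -/
theorem stmt_12 (p : ℕ) [Fact p.Prime] (G : Type*) [Group G] [Finite G]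
    (hp : IsPGroup p G) (hnab : ∃ a b : G, a * b ≠ b * a)
    (h1 : autocommutator G ≤ absoluteCenter G)
    (h2 : absoluteCenter G = Subgroup.center G)
    (h3 : IsCyclic (absoluteCenter G))
    (V : Subgroup (MulAut G))
    (hV : ∀ α : MulAut G, α ∈ V ↔ ∀ g : G, g⁻¹ * α g ∈ absoluteCenter G) :
    V = (MulAut.conj : G →* MulAut G).range :=
  stmt_12_general G h1 h2 h3 V hV
end
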